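/- For every integer r ≥ 2, the matrix A'_r has rank r over ℚ, has exactly binom(r+2,2) − 2 columns, each of its columns is nonzero, and every two distinct columns of A'_r are linearly independent over ℚ. (Hence the vector matroid of A'_r is a simple rank-r matroid of size binom(r+2,2) − 2, attaining the maximum in the main theorem.) -/

import Mathlib

/-!
The first nonzero entry of every column of `A'_r` is `1`: for `e_i` and `e_i - e_j`
(`i < j`) it sits in row `i`, for `e_1 + e_2 - e_k` and `e_1 + e_2` in row `1`. Two proportional
vectors of this shape are equal, so pairwise independence of the columns amounts to their being
distinct. The rank is `r` since `A'_r` contains the identity `I_r`.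
-/

/-- Index set for the columns of `D_r`: pairs `(i, j)` of rows with `i < j`.
There are `r.choose 2` such pairs. -/
abbrev PairIdx (r : ℕ) := {p : Fin r × Fin r // p.1 < p.2}

/-- The matrix `A'_r = [I_r | D_r | C_r | w]`, where the columns of `D_r` are the vectors
`e_i - e_j` for `i < j`, the `j`-th column of `C_r` is `e_1 + e_2 - e_{j+2}`, and
`w = e_1 + e_2`. -/
def A'mat (r : ℕ) : Matrix (Fin r) (Fin r ⊕ PairIdx r ⊕ Fin (r - 2) ⊕ Unit) ℤ :=
  fun i j =>
    match j with
    | Sum.inl k => if i = k then 1 else 0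
    | Sum.inr (Sum.inl p) => (if i = p.1.1 then 1 else 0) + (if i = p.1.2 then -1 else 0)
    | Sum.inr (Sum.inr (Sum.inl k)) =>
        (if (i : ℕ) = 0 then 1 else 0) + (if (i : ℕ) = 1 then 1 else 0)
          - (if (i : ℕ) = (k : ℕ) + 2 then 1 else 0)
    | Sum.inr (Sum.inr (Sum.inr _)) =>
        (if (i : ℕ) = 0 then 1 else 0) + (if (i : ℕ) = 1 then 1 else 0)

/-- A column of `A'_r`, viewed as a vector over `ℚ`. -/
def A'colQ (r : ℕ) (j : Fin r ⊕ PairIdx r ⊕ Fin (r - 2) ⊕ Unit) : Fin r → ℚ :=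
  fun i => (A'mat r i j : ℚ)

def HasLeadingOne {ι K : Type*} [LT ι] [Zero K] [One K] (v : ι → K) : Prop :=
  ∃ i, v i = 1 ∧ ∀ j < i, v j = 0

namespace HasLeadingOne

variable {ι K : Type*} [LinearOrder ι]

theorem ne_zero [Zero K] [One K] [NeZero (1 : K)] {v : ι → K} (hv : HasLeadingOne v) :
    v ≠ 0 := by
  obtain ⟨i, hi, -⟩ := hv
  rintro rfl
  exact one_ne_zero hi.symm

theorem eq_of_smul_eq [MonoidWithZero K] [NeZero (1 : K)] {v w : ι → K} {c : K}
    (hv : HasLeadingOne v) (hw : HasLeadingOne w) (h : c • v = w) : v = w := by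
  obtain ⟨i, hvi, hv0⟩ := hv
  obtain ⟨j, hwj, hw0⟩ := hw
  have hw_apply (k : ι) : w k = c * v k := by rw [← h]; rfl
  have hc : c = 1 := by
    rcases lt_trichotomy j i with hji | rfl | hij
    · have := hw_apply j
      rw [hwj, hv0 j hji, mul_zero] at this
      exact absurd this one_ne_zero
    · simpa [hvi, hwj] using (hw_apply j).symm
    · have hc0 : c = 0 := by simpa [hvi, hw0 i hij] using (hw_apply i).symm
      have := hw_apply j
      rw [hwj, hc0, zero_mul] at this
      exact absurd this one_ne_zero
  rw [← h, hc, one_smul]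

theorem linearIndependent_pair [DivisionRing K] {v w : ι → K} (hv : HasLeadingOne v)
    (hw : HasLeadingOne w) (hne : v ≠ w) : LinearIndependent K ![v, w] :=
  (LinearIndependent.pair_iff' hv.ne_zero).2 fun _ h => hne (hv.eq_of_smul_eq hw h)

end HasLeadingOne

theorem Matrix.rank_eq_card_of_submatrix_eq_one {m n R : Type*} [Fintype m] [Fintype n]
    [DecidableEq m] [CommSemiring R] [StrongRankCondition R] {A : Matrix m n R} (c : m → n)
    (h : A.submatrix id c = 1) : A.rank = Fintype.card m :=
  le_antisymm A.rank_le_card_height (by simpa [h] using A.rank_submatrix_le id c)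

theorem Fintype.card_subtype_fst_lt_snd (α : Type*) [Fintype α] [LinearOrder α] :
    Fintype.card {p : α × α // p.1 < p.2} = (Fintype.card α).choose 2 := by
  rw [Fintype.card_subtype, Fintype.card_product_filter_lt]

namespace A'colQ

variable {r : ℕ}

theorem apply_inl (k i : Fin r) : A'colQ r (Sum.inl k) i = if (i : ℕ) = k then 1 else 0 := by
  simp [A'colQ, A'mat, Fin.ext_iff, apply_ite ((↑) : ℤ → ℚ)]

theorem apply_pair (p : PairIdx r) (i : Fin r) :
    A'colQ r (Sum.inr (Sum.inl p)) i =
      (if (i : ℕ) = p.1.1 then 1 else 0) + (if (i : ℕ) = p.1.2 then -1 else 0) := by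
  simp [A'colQ, A'mat, Fin.ext_iff, apply_ite ((↑) : ℤ → ℚ)]

theorem apply_C (m : Fin (r - 2)) (i : Fin r) :
    A'colQ r (Sum.inr (Sum.inr (Sum.inl m))) i =
      (if (i : ℕ) = 0 then 1 else 0) + (if (i : ℕ) = 1 then 1 else 0)
        - (if (i : ℕ) = m + 2 then 1 else 0) := by
  simp [A'colQ, A'mat, apply_ite ((↑) : ℤ → ℚ)]

theorem apply_w (u : Unit) (i : Fin r) :
    A'colQ r (Sum.inr (Sum.inr (Sum.inr u))) i =
      (if (i : ℕ) = 0 then 1 else 0) + (if (i : ℕ) = 1 then 1 else 0) := by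
  simp [A'colQ, A'mat, apply_ite ((↑) : ℤ → ℚ)]

theorem hasLeadingOne (hr : 0 < r) (j : Fin r ⊕ PairIdx r ⊕ Fin (r - 2) ⊕ Unit) :
    HasLeadingOne (A'colQ r j) := by
  rcases j with k | p | m | u
  · exact ⟨k, by simp [apply_inl], fun i hi => by simp [apply_inl, Fin.val_ne_of_ne hi.ne]⟩
  · have hp : (p.1.1 : ℕ) < p.1.2 := p.2
    refine ⟨p.1.1, by simp [apply_pair, hp.ne], fun i hi => ?_⟩
    have hi : (i : ℕ) < p.1.1 := hi
    simp [apply_pair, hi.ne, (hi.trans hp).ne]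
  · exact ⟨⟨0, hr⟩, by simp [apply_C], fun i hi => (Nat.not_lt_zero i hi).elim⟩
  · exact ⟨⟨0, hr⟩, by simp [apply_w], fun i hi => (Nat.not_lt_zero i hi).elim⟩

/-- The four blocks of columns are told apart by whether the column has a negative entry and
whether its first two entries are both `1`. -/
def kind : Fin r ⊕ PairIdx r ⊕ Fin (r - 2) ⊕ Unit → Bool × Bool
  | Sum.inl _ => (false, false)
  | Sum.inr (Sum.inl _) => (true, false)
  | Sum.inr (Sum.inr (Sum.inl _)) => (true, true)
  | Sum.inr (Sum.inr (Sum.inr _)) => (false, true)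

theorem kind_eq (hr : 2 ≤ r) (j : Fin r ⊕ PairIdx r ⊕ Fin (r - 2) ⊕ Unit) :
    kind j = (decide (∃ i, A'colQ r j i < 0),
      decide (A'colQ r j ⟨0, by omega⟩ = 1 ∧ A'colQ r j ⟨1, by omega⟩ = 1)) := by
  symm
  rcases j with k | p | m | u
  · simp only [kind, apply_inl, Prod.mk.injEq, decide_eq_false_iff_not, not_exists, not_lt, not_and]
    refine ⟨fun i => by positivity, fun h0 => ?_⟩
    simp only [ite_eq_left_iff, zero_ne_one, imp_false, Decidable.not_not] at h0 ⊢
    omega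
  · have hp : (p.1.1 : ℕ) < p.1.2 := p.2
    simp only [kind, apply_pair, Prod.mk.injEq, decide_eq_true_iff, decide_eq_false_iff_not, not_and]
    refine ⟨⟨p.1.2, by simp [hp.ne']⟩, fun h0 h1 => ?_⟩
    split_ifs at h0 h1 <;> first | omega | norm_num at *
  · simp only [kind, apply_C, Prod.mk.injEq, decide_eq_true_iff]
    exact ⟨⟨⟨m + 2, by omega⟩, by simp⟩, by simp⟩
  · simp only [kind, apply_w, Prod.mk.injEq, decide_eq_true_iff, decide_eq_false_iff_not, not_exists, not_lt]
    exact ⟨fun i => by positivity, by simp⟩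

theorem injective (hr : 2 ≤ r) : Function.Injective (A'colQ r) := by
  intro j j' h
  have hkind : kind j = kind j' := by rw [kind_eq hr, kind_eq hr, h]
  rcases j with k | p | m | ⟨⟩ <;> rcases j' with k' | p' | m' | ⟨⟩ <;>
    simp only [kind, Prod.mk.injEq, Bool.false_eq_true, Bool.true_eq_false, and_false,
      false_and] at hkind
  · have e := congrFun h k
    simp only [apply_inl] at e
    simp only [Sum.inl.injEq, Fin.ext_iff]
    split_ifs at e <;> first | omega | norm_num at e
  · have hp : (p.1.1 : ℕ) < p.1.2 := p.2
    have hp' : (p'.1.1 : ℕ) < p'.1.2 := p'.2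
    have e := congrFun h p.1.1
    have e' := congrFun h p.1.2
    simp only [apply_pair] at e e'
    simp only [Sum.inr.injEq, Sum.inl.injEq, Subtype.ext_iff, Prod.ext_iff, Fin.ext_iff]
    split_ifs at e e' <;> first | omega | norm_num at *
  · have e := congrFun h ⟨m + 2, by omega⟩
    simp only [apply_C] at e
    simp only [Sum.inr.injEq, Sum.inl.injEq, Fin.ext_iff]
    split_ifs at e <;> first | omega | norm_num at e
  · rfl

end A'colQ

theorem A'mat_rank (r : ℕ) : ((A'mat r).map ((↑) : ℤ → ℚ)).rank = r := by
  rw [Matrix.rank_eq_card_of_submatrix_eq_one Sum.inl, Fintype.card_fin]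
  ext i k
  simp [A'mat, Matrix.one_apply]

theorem card_A'mat_columns {r : ℕ} (hr : 2 ≤ r) :
    Fintype.card (Fin r ⊕ PairIdx r ⊕ Fin (r - 2) ⊕ Unit) = (r + 2).choose 2 - 2 := by
  have hchoose : (r + 2).choose 2 = (r + 1) + r + r.choose 2 := by
    rw [Nat.choose_succ_succ' (r + 1) 1, Nat.choose_succ_succ' r 1, Nat.choose_one_right,
      Nat.choose_one_right]
    ring
  simp only [Fintype.card_sum, Fintype.card_fin, Fintype.card_unit, PairIdx,
    Fintype.card_subtype_fst_lt_snd, hchoose]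
  omega

/-- For every `r ≥ 2`, the matrix `A'_r` has rank `r` over `ℚ`, has exactly
`(r+2 choose 2) - 2` columns, and its columns are nonzero and pairwise linearly
independent over `ℚ`; hence its vector matroid is a simple rank-`r` matroid of
size `(r+2 choose 2) - 2`. -/
theorem statement14 (r : ℕ) (hr : 2 ≤ r) :
    ((A'mat r).map ((↑) : ℤ → ℚ)).rank = r ∧
    Fintype.card (Fin r ⊕ PairIdx r ⊕ Fin (r - 2) ⊕ Unit) = Nat.choose (r + 2) 2 - 2 ∧
    (∀ j, A'colQ r j ≠ 0) ∧
    (∀ j j', j ≠ j' → LinearIndependent ℚ ![A'colQ r j, A'colQ r j']) := by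
  have hlead := A'colQ.hasLeadingOne (r := r) (by omega)
  exact ⟨A'mat_rank r, card_A'mat_columns hr, fun j => (hlead j).ne_zero,
    fun j j' hne => (hlead j).linearIndependent_pair (hlead j') ((A'colQ.injective hr).ne hne)⟩
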